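/- arXiv:1410.5670 — 2 statements merged into one kernel-verified Lean document; each statement's English description precedes it below -/
import Mathlib

section
/- Let 1 ≤ λ < ∞ and 1 ≤ p < ∞. A Banach space X has the weak λ-BAP for the ideal Π_p of absolutely p-summing operators if and only if X has the local λ-BAP for Π_p. -/
open Filter Topology

noncomputable section

/-- A bundled Banach space over the scalar field `𝕜`. -/
structure BanachSp (𝕜 : Type) [RCLike 𝕜] : Type 1 where
  carrier : Type
  [grp : NormedAddCommGroup carrier]
  [mod : NormedSpace 𝕜 carrier]
  [cpl : CompleteSpace carrier]

attribute [instance] BanachSp.grp BanachSp.mod BanachSp.cpl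

instance {𝕜 : Type} [RCLike 𝕜] : CoeSort (BanachSp 𝕜) Type :=
  ⟨BanachSp.carrier⟩

/-- The dual of a bundled Banach space, as a bundled Banach space. -/
def BanachSp.dual {𝕜 : Type} [RCLike 𝕜] (E : BanachSp 𝕜) : BanachSp 𝕜 :=
  .mk (StrongDual 𝕜 E)

/-- The canonical isometric embedding `J_E` of a Banach space into its bidual. -/
def canJ {𝕜 : Type} [RCLike 𝕜] (E : BanachSp 𝕜) : E →L[𝕜] E.dual.dual :=
  NormedSpace.inclusionInDoubleDual 𝕜 E

/-- The adjoint (dual/transpose) of a bounded operator between Banach spaces. -/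
def opAdj {𝕜 : Type} [RCLike 𝕜] {E F : BanachSp 𝕜} (T : E →L[𝕜] F) :
    F.dual →L[𝕜] E.dual :=
  (ContinuousLinearMap.compL 𝕜 E F 𝕜).flip T

/-- A continuous linear map has finite rank if its range is finite dimensional. -/
def IsFiniteRank {𝕜 : Type} [RCLike 𝕜] {E F : Type} [NormedAddCommGroup E] [NormedSpace 𝕜 E]
    [NormedAddCommGroup F] [NormedSpace 𝕜 F] (T : E →L[𝕜] F) : Prop :=
  FiniteDimensional 𝕜 (LinearMap.range (T : E →ₗ[𝕜] F))

/-- A (nonempty, upward-directed) index for a net. -/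
structure DirNet : Type 1 where
  ι : Type
  [pre : Preorder ι]
  [ne : Nonempty ι]
  [dir : IsDirected ι (· ≤ ·)]

attribute [instance] DirNet.pre DirNet.ne DirNet.dir

/-- The `atTop` filter of a directed index, describing eventual behaviour of nets. -/
def DirNet.filter (d : DirNet) : Filter d.ι := Filter.atTop

/-- A Banach operator ideal `A`: to each pair of Banach spaces `(E, F)` it assigns a
linear subspace `mem E F` of bounded operators together with an ideal norm `anorm`,
which is a complete norm on `mem E F`, contains the rank-one (hence all finite-rank)
operators with `‖x* ⊗ y‖_A = ‖x*‖ * ‖y*‖`, satisfies the ideal property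
`‖R T S‖_A ≤ ‖R‖ ‖T‖_A ‖S‖`, and dominates the operator norm. -/
structure OpIdeal (𝕜 : Type) [RCLike 𝕜] : Type 1 where
  mem : ∀ E F : BanachSp 𝕜, Set (E →L[𝕜] F)
  anorm : ∀ E F : BanachSp 𝕜, (E →L[𝕜] F) → ℝ
  zero_mem : ∀ E F : BanachSp 𝕜, (0 : E →L[𝕜] F) ∈ mem E F
  add_mem : ∀ (E F : BanachSp 𝕜) {T S : E →L[𝕜] F},
    T ∈ mem E F → S ∈ mem E F → T + S ∈ mem E F
  smul_mem : ∀ (E F : BanachSp 𝕜) (c : 𝕜) {T : E →L[𝕜] F}, T ∈ mem E F → c • T ∈ mem E F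
  anorm_add_le : ∀ (E F : BanachSp 𝕜) {T S : E →L[𝕜] F}, T ∈ mem E F → S ∈ mem E F →
    anorm E F (T + S) ≤ anorm E F T + anorm E F S
  anorm_smul : ∀ (E F : BanachSp 𝕜) (c : 𝕜) {T : E →L[𝕜] F}, T ∈ mem E F →
    anorm E F (c • T) = ‖c‖ * anorm E F T
  rankOne_mem : ∀ (E F : BanachSp 𝕜) (f : E →L[𝕜] 𝕜) (y : F), f.smulRight y ∈ mem E F
  anorm_rankOne : ∀ (E F : BanachSp 𝕜) (f : E →L[𝕜] 𝕜) (y : F),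
    anorm E F (f.smulRight y) = ‖f‖ * ‖y‖
  comp_mem : ∀ (E₀ E F F₀ : BanachSp 𝕜) (S : E₀ →L[𝕜] E) {T : E →L[𝕜] F} (R : F →L[𝕜] F₀),
    T ∈ mem E F → R.comp (T.comp S) ∈ mem E₀ F₀
  anorm_comp_le : ∀ (E₀ E F F₀ : BanachSp 𝕜) (S : E₀ →L[𝕜] E) {T : E →L[𝕜] F} (R : F →L[𝕜] F₀),
    T ∈ mem E F → anorm E₀ F₀ (R.comp (T.comp S)) ≤ ‖R‖ * anorm E F T * ‖S‖
  opNorm_le_anorm : ∀ (E F : BanachSp 𝕜) {T : E →L[𝕜] F}, T ∈ mem E F → ‖T‖ ≤ anorm E F T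
  complete : ∀ (E F : BanachSp 𝕜) (f : ℕ → (E →L[𝕜] F)), (∀ n, f n ∈ mem E F) →
    (∀ ε : ℝ, 0 < ε → ∃ N : ℕ, ∀ m ≥ N, ∀ n ≥ N, anorm E F (f m - f n) < ε) →
    ∃ T ∈ mem E F, ∀ ε : ℝ, 0 < ε → ∃ N : ℕ, ∀ n ≥ N, anorm E F (f n - T) < ε

/-- A closed operator ideal: an operator ideal whose components contain all finite-rank
operators and are closed in the operator norm; it carries the operator norm. -/
structure ClosedOpIdeal (𝕜 : Type) [RCLike 𝕜] : Type 1 where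
  mem : ∀ E F : BanachSp 𝕜, Set (E →L[𝕜] F)
  finiteRank_mem : ∀ (E F : BanachSp 𝕜) (T : E →L[𝕜] F), IsFiniteRank T → T ∈ mem E F
  add_mem : ∀ (E F : BanachSp 𝕜) {T S : E →L[𝕜] F},
    T ∈ mem E F → S ∈ mem E F → T + S ∈ mem E F
  smul_mem : ∀ (E F : BanachSp 𝕜) (c : 𝕜) {T : E →L[𝕜] F}, T ∈ mem E F → c • T ∈ mem E F
  comp_mem : ∀ (E₀ E F F₀ : BanachSp 𝕜) (S : E₀ →L[𝕜] E) {T : E →L[𝕜] F} (R : F →L[𝕜] F₀),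
    T ∈ mem E F → R.comp (T.comp S) ∈ mem E₀ F₀
  isClosed : ∀ E F : BanachSp 𝕜, IsClosed (mem E F)

/-- There is a net `(S_α)` of finite-rank operators on `X` converging to the identity
pointwise, with `cost (S_α) ≤ bound + ε` eventually, for every `ε > 0`
(i.e. `limsup_α cost (S_α) ≤ bound`). -/
def IdApproxPtw {𝕜 : Type} [RCLike 𝕜] (X : BanachSp 𝕜)
    (cost : (X →L[𝕜] X) → ℝ) (bound : ℝ) : Prop :=
  ∃ (d : DirNet) (S : d.ι → (X →L[𝕜] X)),
    (∀ α, IsFiniteRank (S α)) ∧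
    (∀ x : X, Tendsto (fun α => S α x) d.filter (𝓝 x)) ∧
    (∀ ε : ℝ, 0 < ε → ∀ᶠ α in d.filter, cost (S α) ≤ bound + ε)

/-- There is a net `(S_α)` of finite-rank operators on `X` converging to the identity
uniformly on every compact subset of `X`, with `limsup_α cost (S_α) ≤ bound`. -/
def IdApproxUnifComp {𝕜 : Type} [RCLike 𝕜] (X : BanachSp 𝕜)
    (cost : (X →L[𝕜] X) → ℝ) (bound : ℝ) : Prop :=
  ∃ (d : DirNet) (S : d.ι → (X →L[𝕜] X)),
    (∀ α, IsFiniteRank (S α)) ∧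
    (∀ K : Set X, IsCompact K →
      TendstoUniformlyOn (fun α (x : X) => S α x) (fun x => x) d.filter K) ∧
    (∀ ε : ℝ, 0 < ε → ∀ᶠ α in d.filter, cost (S α) ≤ bound + ε)

/-- There is a net `(S_α)` of finite-rank operators on `X` converging to the identity in
the topology `τ` on `L(X)`, with `limsup_α cost (S_α) ≤ bound`. -/
def IdApproxTau {𝕜 : Type} [RCLike 𝕜] (X : BanachSp 𝕜) (τ : TopologicalSpace (X →L[𝕜] X))
    (cost : (X →L[𝕜] X) → ℝ) (bound : ℝ) : Prop :=
  ∃ (d : DirNet) (S : d.ι → (X →L[𝕜] X)),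
    (∀ α, IsFiniteRank (S α)) ∧
    Tendsto S d.filter (@nhds _ τ (ContinuousLinearMap.id 𝕜 X)) ∧
    (∀ ε : ℝ, 0 < ε → ∀ᶠ α in d.filter, cost (S α) ≤ bound + ε)

/-- There is a net `(T_α)` of finite-rank operators from `X` to `Y` converging to `T`
pointwise, with `limsup_α cost (T_α) ≤ bound`. -/
def MapApproxPtw {𝕜 : Type} [RCLike 𝕜] {X Y : BanachSp 𝕜} (T : X →L[𝕜] Y)
    (cost : (X →L[𝕜] Y) → ℝ) (bound : ℝ) : Prop :=
  ∃ (d : DirNet) (Tα : d.ι → (X →L[𝕜] Y)),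
    (∀ α, IsFiniteRank (Tα α)) ∧
    (∀ x : X, Tendsto (fun α => Tα α x) d.filter (𝓝 (T x))) ∧
    (∀ ε : ℝ, 0 < ε → ∀ᶠ α in d.filter, cost (Tα α) ≤ bound + ε)

/-- `X` has the `λ`-BAP for the Banach operator ideal `A` (net converging to the identity
uniformly on compact sets, `limsup ‖T S_α‖_A ≤ λ ‖T‖_A`). -/
def HasBAPFor {𝕜 : Type} [RCLike 𝕜] (A : OpIdeal 𝕜) (l : ℝ) (X : BanachSp 𝕜) : Prop :=
  ∀ (Y : BanachSp 𝕜) (T : X →L[𝕜] Y), T ∈ A.mem X Y →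
    IdApproxUnifComp X (fun S => A.anorm X Y (T.comp S)) (l * A.anorm X Y T)

/-- `X` has the weak `λ`-BAP for the Banach operator ideal `A` (net converging to the
identity pointwise, `limsup ‖T S_α‖_A ≤ λ ‖T‖_A`). -/
def HasWeakBAPFor {𝕜 : Type} [RCLike 𝕜] (A : OpIdeal 𝕜) (l : ℝ) (X : BanachSp 𝕜) : Prop :=
  ∀ (Y : BanachSp 𝕜) (T : X →L[𝕜] Y), T ∈ A.mem X Y →
    IdApproxPtw X (fun S => A.anorm X Y (T.comp S)) (l * A.anorm X Y T)

/-- `X` has the local `λ`-BAP for the Banach operator ideal `A` (for every `T ∈ A(X;Y)`,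
a net of finite-rank operators converging to `T` pointwise with
`limsup ‖T_α‖_A ≤ λ ‖T‖_A`). -/
def HasLocalBAPFor {𝕜 : Type} [RCLike 𝕜] (A : OpIdeal 𝕜) (l : ℝ) (X : BanachSp 𝕜) : Prop :=
  ∀ (Y : BanachSp 𝕜) (T : X →L[𝕜] Y), T ∈ A.mem X Y →
    MapApproxPtw T (A.anorm X Y) (l * A.anorm X Y T)

/-- `X` has the approximation property: a net of finite-rank operators converging to the
identity uniformly on compact subsets of `X`. -/
def HasAP {𝕜 : Type} [RCLike 𝕜] (X : BanachSp 𝕜) : Prop :=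
  ∃ (d : DirNet) (S : d.ι → (X →L[𝕜] X)),
    (∀ α, IsFiniteRank (S α)) ∧
    ∀ K : Set X, IsCompact K →
      TendstoUniformlyOn (fun α (x : X) => S α x) (fun x => x) d.filter K
/-- An `A^{dual}`-null sequence in `E`: it factors as `x_n = R z_n` with `(z_n)` norm-null
and `R` an operator whose adjoint belongs to `A`. -/
def ADualNull {𝕜 : Type} [RCLike 𝕜] (A : OpIdeal 𝕜) (E : BanachSp 𝕜) (x : ℕ → E) : Prop :=
  ∃ (Z : BanachSp 𝕜) (R : Z →L[𝕜] E), opAdj R ∈ A.mem E.dual Z.dual ∧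
    ∃ z : ℕ → Z, Tendsto z atTop (𝓝 0) ∧ ∀ n, x n = R (z n)

/-- A Banach operator ideal is injective if membership and the ideal norm are not changed
by composition with an isometric embedding of the target space. -/
def OpIdeal.Injective {𝕜 : Type} [RCLike 𝕜] (A : OpIdeal 𝕜) : Prop :=
  ∀ (E F G : BanachSp 𝕜) (j : F →L[𝕜] G), (∀ y : F, ‖j y‖ = ‖y‖) →
    ∀ T : E →L[𝕜] F, j.comp T ∈ A.mem E G →
      T ∈ A.mem E F ∧ A.anorm E F T = A.anorm E G (j.comp T)

/-- A Banach operator ideal is surjective if membership and the ideal norm are not changed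
by precomposition with a metric surjection (mapping open unit ball onto open unit ball). -/
def OpIdeal.Surjective {𝕜 : Type} [RCLike 𝕜] (A : OpIdeal 𝕜) : Prop :=
  ∀ (Z E F : BanachSp 𝕜) (q : Z →L[𝕜] E),
    (q '' Metric.ball (0 : Z) 1 = Metric.ball (0 : E) 1) →
    ∀ T : E →L[𝕜] F, T.comp q ∈ A.mem Z F →
      T ∈ A.mem E F ∧ A.anorm E F T = A.anorm Z F (T.comp q)

/-- A closed operator ideal is injective if membership is not changed by composition with
an isometric embedding of the target space. -/
def ClosedOpIdeal.Injective {𝕜 : Type} [RCLike 𝕜] (A : ClosedOpIdeal 𝕜) : Prop :=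
  ∀ (E F G : BanachSp 𝕜) (j : F →L[𝕜] G), (∀ y : F, ‖j y‖ = ‖y‖) →
    ∀ T : E →L[𝕜] F, j.comp T ∈ A.mem E G → T ∈ A.mem E F

/-- A compact operator: the image of the closed unit ball is relatively compact. -/
def IsCompactOp {𝕜 : Type} [RCLike 𝕜] {X Y : BanachSp 𝕜} (T : X →L[𝕜] Y) : Prop :=
  IsCompact (closure (T '' Metric.closedBall (0 : X) 1))

/-- A weakly compact operator: the image of the closed unit ball is relatively compact in
the weak topology of the target space. -/
def IsWeaklyCompactOp {𝕜 : Type} [RCLike 𝕜] {X Y : BanachSp 𝕜} (T : X →L[𝕜] Y) : Prop :=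
  IsCompact (closure ((toWeakSpace 𝕜 Y) '' (T '' Metric.closedBall (0 : X) 1)))

/-- An approximable operator: an operator-norm limit of finite-rank operators. -/
def IsApproximable {𝕜 : Type} [RCLike 𝕜] {X Y : BanachSp 𝕜} (T : X →L[𝕜] Y) : Prop :=
  T ∈ closure {S : X →L[𝕜] Y | IsFiniteRank S}

/-- A nuclear representation of `T`: `T = Σ_n f_n ⊗ g_n` with `Σ_n ‖f_n‖ ‖g_n‖ < ∞`. -/
def NuclearRep {𝕜 : Type} [RCLike 𝕜] {X Y : BanachSp 𝕜} (T : X →L[𝕜] Y)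
    (f : ℕ → StrongDual 𝕜 X) (g : ℕ → Y) : Prop :=
  Summable (fun n => ‖f n‖ * ‖g n‖) ∧ ∀ x : X, T x = ∑' n, (f n x) • g n

/-- A nuclear operator. -/
def IsNuclear {𝕜 : Type} [RCLike 𝕜] {X Y : BanachSp 𝕜} (T : X →L[𝕜] Y) : Prop :=
  ∃ f g, NuclearRep T f g

/-- The nuclear norm: infimum of `Σ_n ‖f_n‖ ‖g_n‖` over nuclear representations. -/
def nuclearNorm {𝕜 : Type} [RCLike 𝕜] {X Y : BanachSp 𝕜} (T : X →L[𝕜] Y) : ℝ :=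
  sInf {c : ℝ | ∃ f g, NuclearRep T f g ∧ c = ∑' n, ‖f n‖ * ‖g n‖}

/-- The weak `ℓ_p` norm of a finite family: `sup_{‖f‖ ≤ 1} (Σ_i |f(x_i)|^p)^{1/p}`. -/
def weakLpNorm {𝕜 : Type} [RCLike 𝕜] {X : BanachSp 𝕜} (p : ℝ) {n : ℕ} (x : Fin n → X) : ℝ :=
  sSup {r : ℝ | ∃ f : StrongDual 𝕜 X, ‖f‖ ≤ 1 ∧ r = (∑ i, ‖f (x i)‖ ^ p) ^ (1 / p)}

/-- `C` is an absolutely `p`-summing constant for `T`. -/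
def PSummingWith {𝕜 : Type} [RCLike 𝕜] {X Y : BanachSp 𝕜} (p : ℝ) (T : X →L[𝕜] Y)
    (C : ℝ) : Prop :=
  0 ≤ C ∧ ∀ (n : ℕ) (x : Fin n → X),
    (∑ i, ‖T (x i)‖ ^ p) ^ (1 / p) ≤ C * weakLpNorm p x

/-- An absolutely `p`-summing operator. -/
def IsPSumming {𝕜 : Type} [RCLike 𝕜] {X Y : BanachSp 𝕜} (p : ℝ) (T : X →L[𝕜] Y) : Prop :=
  ∃ C, PSummingWith p T C

/-- The `p`-summing norm `π_p(T)`: the least `p`-summing constant. -/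
def piNorm {𝕜 : Type} [RCLike 𝕜] {X Y : BanachSp 𝕜} (p : ℝ) (T : X →L[𝕜] Y) : ℝ :=
  sInf {C : ℝ | PSummingWith p T C}

/-- A `p`-nuclear representation of `T` (with `q` the conjugate exponent of `p`):
`T = Σ_n f_n ⊗ g_n` with `(f_n)` strongly `p`-summable and `(g_n)` weakly `q`-summable. -/
def PNuclearRep {𝕜 : Type} [RCLike 𝕜] {X Y : BanachSp 𝕜} (p q : ℝ) (T : X →L[𝕜] Y)
    (f : ℕ → StrongDual 𝕜 X) (g : ℕ → Y) : Prop :=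
  Summable (fun n => ‖f n‖ ^ p) ∧
  (∀ h : StrongDual 𝕜 Y, ‖h‖ ≤ 1 → Summable (fun n => ‖h (g n)‖ ^ q)) ∧
  BddAbove {r : ℝ | ∃ h : StrongDual 𝕜 Y, ‖h‖ ≤ 1 ∧
    r = (∑' n, ‖h (g n)‖ ^ q) ^ (1 / q)} ∧
  ∀ x : X, T x = ∑' n, (f n x) • g n

/-- A `p`-nuclear operator (with `q` the conjugate exponent of `p`). -/
def IsPNuclear {𝕜 : Type} [RCLike 𝕜] {X Y : BanachSp 𝕜} (p q : ℝ) (T : X →L[𝕜] Y) : Prop :=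
  ∃ f g, PNuclearRep p q T f g

/-- The `p`-nuclear norm `ν_p(T)`: the infimum of
`(Σ_n ‖f_n‖^p)^{1/p} * sup_{‖h‖ ≤ 1} (Σ_n |h(g_n)|^q)^{1/q}` over representations. -/
def pNuclearNorm {𝕜 : Type} [RCLike 𝕜] {X Y : BanachSp 𝕜} (p q : ℝ) (T : X →L[𝕜] Y) : ℝ :=
  sInf {c : ℝ | ∃ f g, PNuclearRep p q T f g ∧
    c = (∑' n, ‖f n‖ ^ p) ^ (1 / p) *
      sSup {r : ℝ | ∃ h : StrongDual 𝕜 Y, ‖h‖ ≤ 1 ∧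
        r = (∑' n, ‖h (g n)‖ ^ q) ^ (1 / q)}}

/-- A relatively `p`-compact subset of `E` (with `q` the conjugate exponent of `p`):
contained in the `p`-convex hull of a strongly `p`-summable sequence. -/
def RelPCompact {𝕜 : Type} [RCLike 𝕜] {E : BanachSp 𝕜} (p q : ℝ) (K : Set E) : Prop :=
  ∃ x : ℕ → E, Summable (fun n => ‖x n‖ ^ p) ∧
    K ⊆ {y : E | ∃ a : ℕ → 𝕜, Summable (fun n => ‖a n‖ ^ q) ∧
      (∑' n, ‖a n‖ ^ q) ≤ 1 ∧ y = ∑' n, a n • x n}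

/-- The `p`-approximation property: a net of finite-rank operators converging to the
identity uniformly on every relatively `p`-compact subset. -/
def HasPAP {𝕜 : Type} [RCLike 𝕜] (p q : ℝ) (E : BanachSp 𝕜) : Prop :=
  ∃ (d : DirNet) (S : d.ι → (E →L[𝕜] E)),
    (∀ α, IsFiniteRank (S α)) ∧
    ∀ K : Set E, RelPCompact p q K →
      TendstoUniformlyOn (fun α (x : E) => S α x) (fun x => x) d.filter K

/-!
Weak ⇒ local: take `T_α := T ∘ S_α`.

Local ⇒ weak: apply the local property to `T` regarded as an operator into the closure of its
range. The finite-rank approximants `V` then take values in `closure (range T)`, so they lift to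
finite-rank `S` on `X` with `π_p(T S - V)` as small as we like. Given a finite-dimensional
`E ⊆ X` with a finite-rank projection `Q = ∑ β_j ⊗ e_j` onto it, the operator `S + (1 - S) Q`
is the identity on `E`, and
`T (S + (1 - S) Q) = V + (T S - V) (1 - Q) + ∑ β_j ⊗ (T - V) e_j`,
whose `π_p` is at most `π_p(V)` plus small terms once `V` is close to `T` at the `e_j`.
-/

section PSummingBAP

variable {𝕜 : Type} [RCLike 𝕜]

def HasWeakPSummingBAP (p l : ℝ) (X : BanachSp 𝕜) : Prop :=
  ∀ (Y : BanachSp 𝕜) (T : X →L[𝕜] Y), IsPSumming p T →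
    IdApproxPtw X (fun S => piNorm p (T.comp S)) (l * piNorm p T)

def HasLocalPSummingBAP (p l : ℝ) (X : BanachSp 𝕜) : Prop :=
  ∀ (Y : BanachSp 𝕜) (T : X →L[𝕜] Y), IsPSumming p T →
    MapApproxPtw T (fun S => piNorm p S) (l * piNorm p T)

end PSummingBAP

section PSumming

variable {𝕜 : Type} [RCLike 𝕜] {X Y : BanachSp 𝕜} {p : ℝ}

lemma weakLpNorm_nonneg {n : ℕ} (x : Fin n → X) : 0 ≤ weakLpNorm (𝕜 := 𝕜) p x :=
  Real.sSup_nonneg fun _ ⟨_, _, hr⟩ => hr ▸ Real.rpow_nonneg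
    (Finset.sum_nonneg fun _ _ => Real.rpow_nonneg (norm_nonneg _) _) _

lemma sum_mul_rpow_rpow_one_div {n : ℕ} (hp : 0 < p) {c : ℝ} (hc : 0 ≤ c) {v : Fin n → ℝ}
    (hv : ∀ i, 0 ≤ v i) : (∑ i, (c * v i) ^ p) ^ (1 / p) = c * (∑ i, v i ^ p) ^ (1 / p) := by
  simp_rw [Real.mul_rpow hc (hv _), ← Finset.mul_sum]
  rw [Real.mul_rpow (Real.rpow_nonneg hc p)
      (Finset.sum_nonneg fun i _ => Real.rpow_nonneg (hv i) p),
    one_div, Real.rpow_rpow_inv hc hp.ne']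

lemma sum_norm_apply_rpow_le_mul_weakLpNorm (hp : 0 < p) {n : ℕ} (x : Fin n → X)
    (f : StrongDual 𝕜 X) : (∑ i, ‖f (x i)‖ ^ p) ^ (1 / p) ≤ ‖f‖ * weakLpNorm p x := by
  rcases eq_or_ne f 0 with rfl | hf
  · simp [Real.zero_rpow hp.ne', Real.zero_rpow (inv_pos.mpr hp).ne']
  have hf₀ : 0 < ‖f‖ := norm_pos_iff.mpr hf
  have hunit : ‖((‖f‖⁻¹ : ℝ) : 𝕜) • f‖ ≤ 1 := by
    rw [norm_smul, RCLike.norm_ofReal, abs_inv, abs_norm, inv_mul_cancel₀ hf₀.ne']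
  have hle : ‖f‖⁻¹ * (∑ i, ‖f (x i)‖ ^ p) ^ (1 / p) ≤ weakLpNorm p x := by
    refine le_csSup ⟨(∑ i, ‖x i‖ ^ p) ^ (1 / p), ?_⟩ ⟨_, hunit, ?_⟩
    · rintro _ ⟨g, hg, rfl⟩
      gcongr with i
      simpa using g.le_of_opNorm_le hg (x i)
    · rw [← sum_mul_rpow_rpow_one_div hp (inv_nonneg.mpr hf₀.le) fun _ => norm_nonneg _]
      simp
  calc (∑ i, ‖f (x i)‖ ^ p) ^ (1 / p)
      = ‖f‖ * (‖f‖⁻¹ * (∑ i, ‖f (x i)‖ ^ p) ^ (1 / p)) := by field_simp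
    _ ≤ ‖f‖ * weakLpNorm p x := by gcongr

lemma weakLpNorm_comp_le (hp : 0 < p) {W : BanachSp 𝕜} (R : W →L[𝕜] X) {n : ℕ}
    (x : Fin n → W) : weakLpNorm p (fun i => R (x i)) ≤ ‖R‖ * weakLpNorm p x := by
  refine csSup_le ⟨_, 0, by simp, rfl⟩ ?_
  rintro _ ⟨f, hf, rfl⟩
  calc (∑ i, ‖f (R (x i))‖ ^ p) ^ (1 / p) ≤ ‖f.comp R‖ * weakLpNorm p x :=
        sum_norm_apply_rpow_le_mul_weakLpNorm hp x (f.comp R)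
    _ ≤ ‖R‖ * weakLpNorm p x := by
        gcongr
        · exact weakLpNorm_nonneg x
        · calc ‖f.comp R‖ ≤ ‖f‖ * ‖R‖ := f.opNorm_comp_le R
            _ ≤ ‖R‖ := mul_le_of_le_one_left (norm_nonneg R) hf

namespace PSummingWith

lemma mono {A : X →L[𝕜] Y} {C C' : ℝ} (h : PSummingWith p A C) (hC : C ≤ C') :
    PSummingWith p A C' :=
  ⟨h.1.trans hC, fun n x => (h.2 n x).trans (by gcongr; exact weakLpNorm_nonneg x)⟩

lemma add (hp : 1 ≤ p) {A B : X →L[𝕜] Y} {C D : ℝ} (hA : PSummingWith p A C)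
    (hB : PSummingWith p B D) : PSummingWith p (A + B) (C + D) := by
  have hp₀ : 0 < p := zero_lt_one.trans_le hp
  refine ⟨add_nonneg hA.1 hB.1, fun n x => ?_⟩
  calc (∑ i, ‖(A + B) (x i)‖ ^ p) ^ (1 / p)
      ≤ (∑ i, (‖A (x i)‖ + ‖B (x i)‖) ^ p) ^ (1 / p) := by
        gcongr with i
        exact norm_add_le _ _
    _ ≤ (∑ i, ‖A (x i)‖ ^ p) ^ (1 / p) + (∑ i, ‖B (x i)‖ ^ p) ^ (1 / p) :=
        Real.Lp_add_le_of_nonneg _ hp (fun _ _ => norm_nonneg _) fun _ _ => norm_nonneg _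
    _ ≤ C * weakLpNorm p x + D * weakLpNorm p x := add_le_add (hA.2 n x) (hB.2 n x)
    _ = (C + D) * weakLpNorm p x := (add_mul _ _ _).symm

lemma comp {W : BanachSp 𝕜} (hp : 0 < p) {A : X →L[𝕜] Y} {C : ℝ} (hA : PSummingWith p A C)
    (R : W →L[𝕜] X) : PSummingWith p (A.comp R) (C * ‖R‖) := by
  refine ⟨mul_nonneg hA.1 (norm_nonneg R), fun n x => ?_⟩
  calc (∑ i, ‖A.comp R (x i)‖ ^ p) ^ (1 / p) ≤ C * weakLpNorm p (fun i => R (x i)) :=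
        hA.2 n _
    _ ≤ C * (‖R‖ * weakLpNorm p x) := by gcongr; exacts [hA.1, weakLpNorm_comp_le hp R x]
    _ = C * ‖R‖ * weakLpNorm p x := (mul_assoc _ _ _).symm

lemma of_norm_apply_eq {Z : BanachSp 𝕜} {A : X →L[𝕜] Y} {B : X →L[𝕜] Z}
    (hAB : ∀ x, ‖A x‖ = ‖B x‖) {C : ℝ} (hA : PSummingWith p A C) : PSummingWith p B C :=
  ⟨hA.1, fun n x => by simpa only [hAB] using hA.2 n x⟩

lemma piNorm_le {A : X →L[𝕜] Y} {C : ℝ} (hA : PSummingWith p A C) : piNorm p A ≤ C :=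
  csInf_le ⟨0, fun _ hC => hC.1⟩ hA

end PSummingWith

lemma pSummingWith_smulRight (hp : 0 < p) (f : StrongDual 𝕜 X) (y : Y) :
    PSummingWith p (f.smulRight y) (‖f‖ * ‖y‖) := by
  refine ⟨by positivity, fun n x => ?_⟩
  calc (∑ i, ‖f.smulRight y (x i)‖ ^ p) ^ (1 / p) = ‖y‖ * (∑ i, ‖f (x i)‖ ^ p) ^ (1 / p) := by
        simp_rw [ContinuousLinearMap.smulRight_apply, norm_smul, mul_comm _ ‖y‖]
        exact sum_mul_rpow_rpow_one_div hp (norm_nonneg y) fun _ => norm_nonneg _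
    _ ≤ ‖y‖ * (‖f‖ * weakLpNorm p x) := by
        gcongr; exact sum_norm_apply_rpow_le_mul_weakLpNorm hp x f
    _ = ‖f‖ * ‖y‖ * weakLpNorm p x := by ring

lemma pSummingWith_sum_smulRight (hp : 1 ≤ p) {ι : Type*} (s : Finset ι)
    (f : ι → StrongDual 𝕜 X) (y : ι → Y) :
    PSummingWith p (∑ k ∈ s, (f k).smulRight (y k)) (∑ k ∈ s, ‖f k‖ * ‖y k‖) := by
  induction s using Finset.cons_induction with
  | empty =>
    refine ⟨le_rfl, fun n x => ?_⟩
    simp [Real.zero_rpow (zero_lt_one.trans_le hp).ne',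
      Real.zero_rpow (inv_pos.mpr (zero_lt_one.trans_le hp)).ne']
  | cons k s hk ih =>
    simp only [Finset.sum_cons]
    exact (pSummingWith_smulRight (zero_lt_one.trans_le hp) _ _).add hp ih

lemma IsPSumming.pSummingWith_piNorm {A : X →L[𝕜] Y} (hA : IsPSumming p A) :
    PSummingWith p A (piNorm p A) := by
  refine ⟨Real.sInf_nonneg fun _ hC => hC.1, fun n x => ?_⟩
  rcases (weakLpNorm_nonneg (p := p) x).eq_or_lt with hw | hw
  · obtain ⟨C, hC⟩ := hA
    simpa [← hw] using hC.2 n x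
  · rw [← div_le_iff₀ hw]
    exact le_csInf hA fun C hC => (div_le_iff₀ hw).mpr (hC.2 n x)

lemma piNorm_eq_of_norm_apply_eq {Z : BanachSp 𝕜} {A : X →L[𝕜] Y} {B : X →L[𝕜] Z}
    (hAB : ∀ x, ‖A x‖ = ‖B x‖) : piNorm p A = piNorm p B := by
  simp only [piNorm]
  congr 1
  ext C
  exact ⟨.of_norm_apply_eq hAB, .of_norm_apply_eq fun x => (hAB x).symm⟩

end PSumming

section FiniteRank

variable {𝕜 : Type} [RCLike 𝕜] {X Y : BanachSp 𝕜}

lemma IsFiniteRank.add {A B : X →L[𝕜] Y} (hA : IsFiniteRank A) (hB : IsFiniteRank B) :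
    IsFiniteRank (A + B) := by
  unfold IsFiniteRank at *
  refine Submodule.finiteDimensional_of_le (?_ : _ ≤ LinearMap.range (A : X →ₗ[𝕜] Y) ⊔
    LinearMap.range (B : X →ₗ[𝕜] Y))
  rintro _ ⟨x, rfl⟩
  exact Submodule.add_mem_sup ⟨x, rfl⟩ ⟨x, rfl⟩

lemma IsFiniteRank.clm_comp {W : BanachSp 𝕜} {S : W →L[𝕜] X} (hS : IsFiniteRank S)
    (T : X →L[𝕜] Y) : IsFiniteRank (T.comp S) := by
  unfold IsFiniteRank at *
  rw [ContinuousLinearMap.toLinearMap_comp, LinearMap.range_comp]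
  exact Module.Finite.map _ _

lemma isFiniteRank_sum_smulRight {ι : Type*} [Fintype ι] (f : ι → StrongDual 𝕜 X)
    (y : ι → Y) : IsFiniteRank (∑ k, (f k).smulRight (y k)) := by
  have := FiniteDimensional.span_of_finite 𝕜 (Set.finite_range y)
  refine Submodule.finiteDimensional_of_le (?_ : _ ≤ Submodule.span 𝕜 (Set.range y))
  rintro _ ⟨x, rfl⟩
  simp only [ContinuousLinearMap.toLinearMap_sum, ContinuousLinearMap.coe_smulRight,
    LinearMap.coe_sum, LinearMap.coe_smulRight, ContinuousLinearMap.coe_coe, Finset.sum_apply]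
  exact Submodule.sum_mem _ fun k _ => Submodule.smul_mem _ _ (Submodule.subset_span ⟨k, rfl⟩)

lemma IsFiniteRank.exists_eq_sum_smulRight {V : X →L[𝕜] Y} (hV : IsFiniteRank V) :
    ∃ (m : ℕ) (f : Fin m → StrongDual 𝕜 X) (y : Fin m → Y),
      (∀ k, y k ∈ LinearMap.range (V : X →ₗ[𝕜] Y)) ∧ V = ∑ k, (f k).smulRight (y k) := by
  unfold IsFiniteRank at hV
  let b := Module.finBasis 𝕜 (LinearMap.range (V : X →ₗ[𝕜] Y))
  let V' : X →L[𝕜] LinearMap.range (V : X →ₗ[𝕜] Y) := V.codRestrict _ fun x => ⟨x, rfl⟩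
  refine ⟨_, fun k => (LinearMap.toContinuousLinearMap (b.coord k)).comp V',
    fun k => b k, fun k => (b k).2, ?_⟩
  ext x
  conv_lhs => rw [show V x = (V' x : Y) from rfl, ← b.sum_repr (V' x)]
  simp only [ContinuousLinearMap.coe_rangeRestrict, AddSubmonoidClass.coe_finsetSum,
    SetLike.val_smul, sum_apply, ContinuousLinearMap.smulRight_apply,
    ContinuousLinearMap.comp_apply, V']
  rfl

lemma IsFiniteRank.isPSumming {p : ℝ} (hp : 1 ≤ p) {V : X →L[𝕜] Y} (hV : IsFiniteRank V) :
    IsPSumming p V := by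
  obtain ⟨m, f, y, -, rfl⟩ := hV.exists_eq_sum_smulRight
  exact ⟨_, pSummingWith_sum_smulRight hp Finset.univ f y⟩

lemma Submodule.exists_finiteRank_projection (E : Submodule 𝕜 X) [FiniteDimensional 𝕜 E] :
    ∃ Q : X →L[𝕜] X, IsFiniteRank Q ∧ ∀ x ∈ E, Q x = x := by
  obtain ⟨P, hP⟩ := Submodule.ClosedComplemented.of_finiteDimensional E
  refine ⟨E.subtypeL.comp P, ?_, fun x hx => congrArg Subtype.val (hP ⟨x, hx⟩)⟩
  rw [IsFiniteRank, ContinuousLinearMap.toLinearMap_comp, LinearMap.range_comp]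
  exact Module.Finite.map _ _

end FiniteRank

lemma div_add_one_mul_le {a N : ℝ} (ha : 0 ≤ a) (hN : 0 ≤ N) : a / (N + 1) * N ≤ a := by
  rw [div_mul_eq_mul_div, div_le_iff₀ (by positivity)]
  nlinarith

section Approximation

variable {𝕜 : Type} [RCLike 𝕜] {X Y : BanachSp 𝕜} {p l : ℝ}

lemma exists_finiteRank_pSummingWith_comp_sub (hp : 1 ≤ p) (T : X →L[𝕜] Y) {V : X →L[𝕜] Y}
    (hV : IsFiniteRank V) (hVT : ∀ x, V x ∈ closure (Set.range T)) {η : ℝ} (hη : 0 < η) :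
    ∃ S : X →L[𝕜] X, IsFiniteRank S ∧ PSummingWith p (T.comp S - V) η := by
  obtain ⟨m, f, y, hy, rfl⟩ := hV.exists_eq_sum_smulRight
  set G := ∑ k, ‖f k‖
  have hG : 0 ≤ G := Finset.sum_nonneg fun _ _ => norm_nonneg _
  have hz : ∀ k, ∃ z, ‖T z - y k‖ ≤ η / (G + 1) := fun k => by
    obtain ⟨x, hx⟩ := hy k
    obtain ⟨_, ⟨z, rfl⟩, hz⟩ := Metric.mem_closure_iff.mp (hx ▸ hVT x) (η / (G + 1)) (by positivity)
    exact ⟨z, by rw [← dist_eq_norm, dist_comm]; exact hz.le⟩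
  choose z hz using hz
  refine ⟨∑ k, (f k).smulRight (z k), isFiniteRank_sum_smulRight f z, ?_⟩
  have hdiff : T.comp (∑ k, (f k).smulRight (z k)) - ∑ k, (f k).smulRight (y k) =
      ∑ k, (f k).smulRight (T (z k) - y k) := by
    ext x
    simp [smul_sub, Finset.sum_sub_distrib]
  rw [hdiff]
  refine (pSummingWith_sum_smulRight hp _ f _).mono ?_
  calc ∑ k, ‖f k‖ * ‖T (z k) - y k‖ ≤ ∑ k, ‖f k‖ * (η / (G + 1)) := by gcongr; exact hz _
    _ = η / (G + 1) * G := by rw [← Finset.sum_mul, mul_comm]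
    _ ≤ η := div_add_one_mul_le hη.le hG

lemma HasLocalPSummingBAP.exists_finiteRank_near (hp : 1 ≤ p) (hX : HasLocalPSummingBAP p l X)
    {T : X →L[𝕜] Y} (hT : IsPSumming p T) {ι : Type*} [Finite ι] (e : ι → X) {δ ε : ℝ}
    (hδ : 0 < δ) (hε : 0 < ε) :
    ∃ V : X →L[𝕜] Y, IsFiniteRank V ∧ (∀ x, V x ∈ closure (Set.range T)) ∧
      PSummingWith p V (l * piNorm p T + ε) ∧ ∀ j, ‖V (e j) - T (e j)‖ ≤ δ := by
  set Z := (LinearMap.range (T : X →ₗ[𝕜] Y)).topologicalClosure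
  have : CompleteSpace Z := (Submodule.isClosed_topologicalClosure _).completeSpace_coe
  let T₁ : X →L[𝕜] (⟨Z⟩ : BanachSp 𝕜) :=
    T.codRestrict Z fun x => Submodule.le_topologicalClosure _ ⟨x, rfl⟩
  have hT₁ : ∀ x, ‖T x‖ = ‖T₁ x‖ := fun _ => rfl
  obtain ⟨d, U, hU, hUT, hUcost⟩ := hX _ T₁ (let ⟨C, hC⟩ := hT; ⟨C, hC.of_norm_apply_eq hT₁⟩)
  have : d.filter.NeBot := Filter.atTop_neBot
  have hnear : ∀ᶠ α in d.filter, ∀ j, ‖U α (e j) - T₁ (e j)‖ ≤ δ :=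
    Filter.eventually_all.mpr fun j =>
      (Metric.tendsto_nhds.mp (hUT (e j)) δ hδ).mono fun α h => by
        rw [dist_eq_norm] at h
        exact h.le
  obtain ⟨α, hcost, hα⟩ := ((hUcost ε hε).and hnear).exists
  rw [← piNorm_eq_of_norm_apply_eq hT₁] at hcost
  refine ⟨Z.subtypeL.comp (U α), (hU α).clm_comp _, fun x => ?_,
    (((hU α).isPSumming hp).pSummingWith_piNorm.of_norm_apply_eq fun _ => rfl).mono hcost, hα⟩
  have hx : (U α x : Y) ∈ (Z : Set Y) := (U α x).2
  rwa [Submodule.topologicalClosure_coe, LinearMap.coe_range, ContinuousLinearMap.coe_coe] at hx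

lemma HasLocalPSummingBAP.exists_finiteRank_eqOn_piNorm_comp_le (hp : 1 ≤ p)
    (hX : HasLocalPSummingBAP p l X) {T : X →L[𝕜] Y} (hT : IsPSumming p T)
    (E : Submodule 𝕜 X) [FiniteDimensional 𝕜 E] {ε : ℝ} (hε : 0 < ε) :
    ∃ S : X →L[𝕜] X, IsFiniteRank S ∧ (∀ x ∈ E, S x = x) ∧
      piNorm p (T.comp S) ≤ l * piNorm p T + ε := by
  obtain ⟨Q, hQ, hQE⟩ := E.exists_finiteRank_projection
  obtain ⟨m, β, e, -, hQβ⟩ := hQ.exists_eq_sum_smulRight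
  set B := ∑ j, ‖β j‖
  have hB : 0 ≤ B := Finset.sum_nonneg fun _ _ => norm_nonneg _
  set N := ‖ContinuousLinearMap.id 𝕜 X - Q‖
  have hN : 0 ≤ N := norm_nonneg _
  obtain ⟨V, hV, hVT, hVcost, hVe⟩ :=
    hX.exists_finiteRank_near hp hT e (δ := ε / 3 / (B + 1)) (by positivity) (ε := ε / 3)
      (by positivity)
  obtain ⟨S, hS, hD⟩ :=
    exists_finiteRank_pSummingWith_comp_sub hp T hV hVT (η := ε / 3 / (N + 1)) (by positivity)
  refine ⟨S + (ContinuousLinearMap.id 𝕜 X - S).comp Q, hS.add (hQ.clm_comp _),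
    fun x hx => by simp [hQE x hx], ?_⟩
  have hdecomp : T.comp (S + (ContinuousLinearMap.id 𝕜 X - S).comp Q) =
      V + (T.comp S - V).comp (ContinuousLinearMap.id 𝕜 X - Q) +
        ∑ j, (β j).smulRight (T (e j) - V (e j)) := by
    rw [hQβ]
    ext x
    simp [smul_sub, Finset.sum_sub_distrib]
    abel
  have hcorr : PSummingWith p (∑ j, (β j).smulRight (T (e j) - V (e j))) (ε / 3) := by
    refine (pSummingWith_sum_smulRight hp _ β _).mono ?_
    calc ∑ j, ‖β j‖ * ‖T (e j) - V (e j)‖ ≤ ∑ j, ‖β j‖ * (ε / 3 / (B + 1)) := by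
          gcongr with j; rw [norm_sub_rev]; exact hVe j
      _ = ε / 3 / (B + 1) * B := by rw [← Finset.sum_mul, mul_comm]
      _ ≤ ε / 3 := div_add_one_mul_le (by positivity) hB
  rw [hdecomp]
  refine (((hVcost.add hp (hD.comp (zero_lt_one.trans_le hp) _)).add hp hcorr).mono ?_).piNorm_le
  have := div_add_one_mul_le (a := ε / 3) (by positivity) hN
  linarith

end Approximation

lemma idApproxPtw_of_forall_finset {𝕜 : Type} [RCLike 𝕜] {X : BanachSp 𝕜}
    {cost : (X →L[𝕜] X) → ℝ} {bound : ℝ}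
    (h : ∀ (F : Finset X) (ε : ℝ), 0 < ε →
      ∃ S : X →L[𝕜] X, IsFiniteRank S ∧ (∀ x ∈ F, S x = x) ∧ cost S ≤ bound + ε) :
    IdApproxPtw X cost bound := by
  classical
  choose S hS hSF hcost using
    fun a : Finset X × ℕ => h a.1 (1 / (a.2 + 1)) Nat.one_div_pos_of_nat
  refine ⟨⟨Finset X × ℕ⟩, S, hS, fun x => tendsto_const_nhds.congr' ?_, fun ε hε => ?_⟩
  · filter_upwards [Filter.eventually_ge_atTop ({x}, 0)] with a ha
    exact (hSF a x (ha.1 (Finset.mem_singleton_self x))).symm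
  · obtain ⟨n, hn⟩ := exists_nat_one_div_lt hε
    filter_upwards [Filter.eventually_ge_atTop (∅, n)] with a ha
    calc cost (S a) ≤ bound + 1 / (a.2 + 1) := hcost a
      _ ≤ bound + ε := by
        gcongr
        refine le_trans ?_ hn.le
        gcongr
        exact_mod_cast ha.2

section PSummingBAP

variable {𝕜 : Type} [RCLike 𝕜] {X : BanachSp 𝕜} {p l : ℝ}

lemma HasWeakPSummingBAP.hasLocalPSummingBAP (hX : HasWeakPSummingBAP p l X) :
    HasLocalPSummingBAP p l X := fun Y T hT =>
  let ⟨d, S, hS, hSx, hcost⟩ := hX Y T hT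
  ⟨d, fun α => T.comp (S α), fun α => (hS α).clm_comp T,
    fun x => (T.continuous.tendsto x).comp (hSx x), hcost⟩

lemma HasLocalPSummingBAP.hasWeakPSummingBAP (hp : 1 ≤ p) (hX : HasLocalPSummingBAP p l X) :
    HasWeakPSummingBAP p l X := fun _ _ hT =>
  idApproxPtw_of_forall_finset fun F _ hε =>
    let ⟨S, hS, hSF, hST⟩ :=
      hX.exists_finiteRank_eqOn_piNorm_comp_le hp hT (Submodule.span 𝕜 F) hε
    ⟨S, hS, fun x hx => hSF x (Submodule.subset_span hx), hST⟩

end PSummingBAP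

theorem stmt9_general {𝕜 : Type} [RCLike 𝕜] (l : ℝ) (p : ℝ) (hp : 1 ≤ p)
    (X : BanachSp 𝕜) :
    (∀ (Y : BanachSp 𝕜) (T : X →L[𝕜] Y), IsPSumming p T →
        IdApproxPtw X (fun S => piNorm p (T.comp S)) (l * piNorm p T)) ↔
    (∀ (Y : BanachSp 𝕜) (T : X →L[𝕜] Y), IsPSumming p T →
        MapApproxPtw T (fun S => piNorm p S) (l * piNorm p T)) :=
  ⟨HasWeakPSummingBAP.hasLocalPSummingBAP, HasLocalPSummingBAP.hasWeakPSummingBAP hp⟩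

theorem stmt9 {𝕜 : Type} [RCLike 𝕜] (l : ℝ) (hl : 1 ≤ l) (p : ℝ) (hp : 1 ≤ p)
    (X : BanachSp 𝕜) :
    (∀ (Y : BanachSp 𝕜) (T : X →L[𝕜] Y), IsPSumming p T →
        IdApproxPtw X (fun S => piNorm p (T.comp S)) (l * piNorm p T)) ↔
    (∀ (Y : BanachSp 𝕜) (T : X →L[𝕜] Y), IsPSumming p T →
        MapApproxPtw T (fun S => piNorm p S) (l * piNorm p T)) :=
  stmt9_general l p hp X
end
end

section
/- Let A be a Banach operator ideal, 1 ≤ λ < ∞, X a Banach space and τ any topology on L(X) = L(X;X). The following are equivalent: (i) for every Banach space Y and every T ∈ A^{reg}(X;Y) there is a net (S_α) of finite-rank operators on X such that S_α → I_X in τ and limsup_α ‖T S_α‖_{A^{reg}} ≤ λ‖T‖_{A^{reg}}; (ii) for every Banach space Y and every T ∈ A(X;Y*) there is a net (S_α) of finite-rank operators on X such that S_α → I_X in τ and limsup_α ‖T S_α‖_A ≤ λ‖T‖_A; (iii) for every Banach space Y and every T ∈ A(X;Y**) there is a net (S_α) of finite-rank operators on X such that S_α → I_X in τ and limsup_α ‖T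 S_α‖_A ≤ λ‖T‖_A. -/
open Filter Topology

noncomputable section

/-! `J_{Y*}` has the norm-one left inverse `(J_Y)*`, so `‖J_{Y*} R‖_A = ‖R‖_A` for every
`R ∈ A(X;Y*)`. Hence (i) or (iii) applied to `J_{Y*} T` gives (ii) for `T`, while (i) and (iii)
are instances of (ii) at the space `Y*`. -/

lemma norm_opAdj_le {𝕜 : Type} [RCLike 𝕜] {E F : BanachSp 𝕜} (T : E →L[𝕜] F) :
    ‖opAdj T‖ ≤ ‖T‖ :=
  ContinuousLinearMap.opNorm_le_bound _ (norm_nonneg T) fun f =>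
    (ContinuousLinearMap.opNorm_comp_le f T).trans_eq (mul_comm _ _)

lemma norm_canJ_le {𝕜 : Type} [RCLike 𝕜] (E : BanachSp 𝕜) : ‖canJ E‖ ≤ 1 :=
  NormedSpace.inclusionInDoubleDual_norm_le 𝕜 E

lemma opAdj_canJ_comp_canJ_dual {𝕜 : Type} [RCLike 𝕜] (Y : BanachSp 𝕜) :
    (opAdj (canJ Y)).comp (canJ Y.dual) = ContinuousLinearMap.id 𝕜 Y.dual :=
  rfl

namespace OpIdeal

variable {𝕜 : Type} [RCLike 𝕜] (A : OpIdeal 𝕜) {X E F : BanachSp 𝕜}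

lemma anorm_nonneg {T : X →L[𝕜] E} (hT : T ∈ A.mem X E) : 0 ≤ A.anorm X E T :=
  (norm_nonneg T).trans (A.opNorm_le_anorm X E hT)

lemma comp_right_mem {T : X →L[𝕜] E} (hT : T ∈ A.mem X E) (S : X →L[𝕜] X) :
    T.comp S ∈ A.mem X E := by
  simpa using A.comp_mem X X E E S (ContinuousLinearMap.id 𝕜 E) hT

lemma comp_left_mem (j : E →L[𝕜] F) {T : X →L[𝕜] E} (hT : T ∈ A.mem X E) :
    j.comp T ∈ A.mem X F := by
  simpa using A.comp_mem X X E F (ContinuousLinearMap.id 𝕜 X) j hT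

lemma anorm_comp_left_le (j : E →L[𝕜] F) {T : X →L[𝕜] E} (hT : T ∈ A.mem X E) :
    A.anorm X F (j.comp T) ≤ ‖j‖ * A.anorm X E T := by
  have h := A.anorm_comp_le X X E F (ContinuousLinearMap.id 𝕜 X) j hT
  rw [ContinuousLinearMap.comp_id] at h
  exact h.trans (mul_le_of_le_one_right (mul_nonneg (norm_nonneg j) (A.anorm_nonneg hT))
    ContinuousLinearMap.norm_id_le)

lemma anorm_comp_left_eq_of_leftInverse (j : E →L[𝕜] F) (P : F →L[𝕜] E)
    (hPj : P.comp j = ContinuousLinearMap.id 𝕜 E) (hj : ‖j‖ ≤ 1) (hP : ‖P‖ ≤ 1)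
    {T : X →L[𝕜] E} (hT : T ∈ A.mem X E) :
    A.anorm X F (j.comp T) = A.anorm X E T := by
  have hjT := A.comp_left_mem j hT
  apply le_antisymm
  · exact (A.anorm_comp_left_le j hT).trans (mul_le_of_le_one_left (A.anorm_nonneg hT) hj)
  · calc A.anorm X E T = A.anorm X E (P.comp (j.comp T)) := by
          rw [← ContinuousLinearMap.comp_assoc, hPj, ContinuousLinearMap.id_comp]
      _ ≤ ‖P‖ * A.anorm X F (j.comp T) := A.anorm_comp_left_le P hjT
      _ ≤ A.anorm X F (j.comp T) := mul_le_of_le_one_left (A.anorm_nonneg hjT) hP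

lemma anorm_canJ_dual_comp {Y : BanachSp 𝕜} {T : X →L[𝕜] Y.dual} (hT : T ∈ A.mem X Y.dual) :
    A.anorm X Y.dual.dual.dual ((canJ Y.dual).comp T) = A.anorm X Y.dual T :=
  A.anorm_comp_left_eq_of_leftInverse _ _ (opAdj_canJ_comp_canJ_dual Y) (norm_canJ_le _)
    ((norm_opAdj_le _).trans (norm_canJ_le Y)) hT

lemma idApproxTau_canJ_dual_comp_iff (l : ℝ) (τ : TopologicalSpace (X →L[𝕜] X))
    {Y : BanachSp 𝕜} {T : X →L[𝕜] Y.dual} (hT : T ∈ A.mem X Y.dual) :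
    IdApproxTau X τ (fun S => A.anorm X Y.dual.dual.dual (((canJ Y.dual).comp T).comp S))
        (l * A.anorm X Y.dual.dual.dual ((canJ Y.dual).comp T)) ↔
      IdApproxTau X τ (fun S => A.anorm X Y.dual (T.comp S)) (l * A.anorm X Y.dual T) := by
  have hcost : (fun S : X →L[𝕜] X =>
      A.anorm X Y.dual.dual.dual (((canJ Y.dual).comp T).comp S)) =
        fun S => A.anorm X Y.dual (T.comp S) :=
    funext fun S => by
      rw [ContinuousLinearMap.comp_assoc, A.anorm_canJ_dual_comp (A.comp_right_mem hT S)]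
  rw [hcost, A.anorm_canJ_dual_comp hT]

end OpIdeal

theorem stmt12_general {𝕜 : Type} [RCLike 𝕜] (A : OpIdeal 𝕜) (l : ℝ)
    (X : BanachSp 𝕜) (τ : TopologicalSpace (X →L[𝕜] X)) :
    ((∀ (Y : BanachSp 𝕜) (T : X →L[𝕜] Y), (canJ Y).comp T ∈ A.mem X Y.dual.dual →
        IdApproxTau X τ (fun S => A.anorm X Y.dual.dual (((canJ Y).comp T).comp S))
          (l * A.anorm X Y.dual.dual ((canJ Y).comp T))) ↔
      (∀ (Y : BanachSp 𝕜) (T : X →L[𝕜] Y.dual), T ∈ A.mem X Y.dual →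
        IdApproxTau X τ (fun S => A.anorm X Y.dual (T.comp S))
          (l * A.anorm X Y.dual T))) ∧
    ((∀ (Y : BanachSp 𝕜) (T : X →L[𝕜] Y.dual), T ∈ A.mem X Y.dual →
        IdApproxTau X τ (fun S => A.anorm X Y.dual (T.comp S))
          (l * A.anorm X Y.dual T)) ↔
      (∀ (Y : BanachSp 𝕜) (T : X →L[𝕜] Y.dual.dual), T ∈ A.mem X Y.dual.dual →
        IdApproxTau X τ (fun S => A.anorm X Y.dual.dual (T.comp S))
          (l * A.anorm X Y.dual.dual T))) := by
  refine ⟨⟨fun h Y T hT => ?_, fun h Y T hT => h Y.dual _ hT⟩,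
    ⟨fun h Y T hT => h Y.dual T hT, fun h Y T hT => ?_⟩⟩ <;>
  exact (A.idApproxTau_canJ_dual_comp_iff l τ hT).1 (h Y.dual _ (A.comp_left_mem _ hT))

theorem stmt12 {𝕜 : Type} [RCLike 𝕜] (A : OpIdeal 𝕜) (l : ℝ) (hl : 1 ≤ l)
    (X : BanachSp 𝕜) (τ : TopologicalSpace (X →L[𝕜] X)) :
    ((∀ (Y : BanachSp 𝕜) (T : X →L[𝕜] Y), (canJ Y).comp T ∈ A.mem X Y.dual.dual →
        IdApproxTau X τ (fun S => A.anorm X Y.dual.dual (((canJ Y).comp T).comp S))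
          (l * A.anorm X Y.dual.dual ((canJ Y).comp T))) ↔
      (∀ (Y : BanachSp 𝕜) (T : X →L[𝕜] Y.dual), T ∈ A.mem X Y.dual →
        IdApproxTau X τ (fun S => A.anorm X Y.dual (T.comp S))
          (l * A.anorm X Y.dual T))) ∧
    ((∀ (Y : BanachSp 𝕜) (T : X →L[𝕜] Y.dual), T ∈ A.mem X Y.dual →
        IdApproxTau X τ (fun S => A.anorm X Y.dual (T.comp S))
          (l * A.anorm X Y.dual T)) ↔
      (∀ (Y : BanachSp 𝕜) (T : X →L[𝕜] Y.dual.dual), T ∈ A.mem X Y.dual.dual →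
        IdApproxTau X τ (fun S => A.anorm X Y.dual.dual (T.comp S))
          (l * A.anorm X Y.dual.dual T))) :=
  stmt12_general A l X τ
end
end
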